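/- arXiv:2109.06507 — 2 statements merged into one kernel-verified Lean document; each statement's English description precedes it below -/
import Mathlib

section
/- An element $x\in\mathbb{R}_3$ with $x^2=-1$ automatically has real norm and real trace: $n(x)=1$ and $t(x)=0$. Hence every square root of $-1$ in $\mathbb{R}_3$ lies in the quadratic cone $\mathcal{Q}_{\mathbb{R}_3}=\mathbb{R}\cup\{x\in\mathbb{R}_3\setminus\mathbb{R}: t(x)\in\mathbb{R},\ n(x)\in\mathbb{R}\}$. -/
/-- The euclidean quadratic form on `ℝ³`, negated so that the Clifford relations read
`eᵢeⱼ + eⱼeᵢ = -2δᵢⱼ`. -/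
noncomputable def Q3 : QuadraticForm ℝ (Fin 3 → ℝ) :=
  QuadraticMap.weightedSumSquares ℝ (fun _ : Fin 3 => (-1 : ℝ))

/-- The real Clifford algebra `ℝ₃`. -/
abbrev Cl3 : Type := CliffordAlgebra Q3

/-- The generators `e₁, e₂, e₃`. -/
noncomputable def e (i : Fin 3) : Cl3 := CliffordAlgebra.ι Q3 (Pi.single i 1)

/-- The volume element `e₁₂₃ = e₁e₂e₃`. -/
noncomputable def e123 : Cl3 := e 0 * e 1 * e 2

/-- The idempotent `ω₊ = (1 + e₁₂₃)/2`. -/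
noncomputable def ωp : Cl3 := ((2 : ℝ)⁻¹) • (1 + e123)

/-- The idempotent `ω₋ = (1 - e₁₂₃)/2`. -/
noncomputable def ωm : Cl3 := ((2 : ℝ)⁻¹) • (1 - e123)

/-- The even subalgebra `ℝ₃⁺`. -/
noncomputable def Cl3even : Subalgebra ℝ Cl3 := CliffordAlgebra.even Q3

/-- Clifford conjugation: the antiautomorphism sending each generator `eᵢ` to `-eᵢ`. -/
noncomputable def cconj (x : Cl3) : Cl3 :=
  CliffordAlgebra.reverse (CliffordAlgebra.involute x)

/-- The trace `t(x) = x + x̄`. -/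
noncomputable def ctrace (x : Cl3) : Cl3 := x + cconj x

/-- The norm `n(x) = x x̄`. -/
noncomputable def cnorm (x : Cl3) : Cl3 := x * cconj x

/-- The real subalgebra of `ℝ₃`, i.e. the real multiples of `1`. -/
def realSet : Set Cl3 := Set.range (algebraMap ℝ Cl3)

/-- The quadratic cone of `ℝ₃`. -/
def QCone : Set Cl3 :=
  realSet ∪ {x | x ∉ realSet ∧ ctrace x ∈ realSet ∧ cnorm x ∈ realSet}

open scoped Quaternion

open CliffordAlgebra in

lemma e_sq (i : Fin 3) : e i * e i = -1 := by
  rw [e, ι_sq_scalar]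
  have : Q3 (Pi.single i 1) = -1 := by
    simp [Q3, QuadraticMap.weightedSumSquares_apply, Fin.sum_univ_three]
    fin_cases i <;> simp
  rw [this]; simp

open CliffordAlgebra in

lemma e_anti {i j : Fin 3} (h : i ≠ j) : e i * e j = -(e j * e i) := by
  have := ι_mul_ι_add_swap (Q := Q3) (Pi.single i 1) (Pi.single j 1)
  have hp : QuadraticMap.polar Q3 (Pi.single i 1) (Pi.single j 1) = 0 := by
    simp [QuadraticMap.polar, Q3, QuadraticMap.weightedSumSquares_apply, Fin.sum_univ_three]
    fin_cases i <;> fin_cases j <;> simp_all <;> ring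
  rw [hp] at this
  simp only [map_zero] at this
  rw [e, e]
  linear_combination (norm := noncomm_ring) this

lemma e_swap_sum {i j : Fin 3} (h : i ≠ j) : e i * e j + e j * e i = 0 := by
  rw [e_anti h]; abel

lemma e123_comm_e (i : Fin 3) : e123 * e i = e i * e123 := by
  fin_cases i
  · show e 0 * e 1 * e 2 * e 0 = e 0 * (e 0 * e 1 * e 2)
    linear_combination (norm := noncomm_ring)
      (e 0 * e 1) * e_swap_sum (show (2:Fin 3) ≠ 0 by decide)
      - e 0 * (e_swap_sum (show (1:Fin 3) ≠ 0 by decide)) * e 2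
  · show e 0 * e 1 * e 2 * e 1 = e 1 * (e 0 * e 1 * e 2)
    linear_combination (norm := noncomm_ring)
      (e 0 * e 1) * e_swap_sum (show (2:Fin 3) ≠ 1 by decide)
      - (e_swap_sum (show (0:Fin 3) ≠ 1 by decide)) * (e 1 * e 2)
  · show e 0 * e 1 * e 2 * e 2 = e 2 * (e 0 * e 1 * e 2)
    linear_combination (norm := noncomm_ring)
      e 0 * (e_swap_sum (show (1:Fin 3) ≠ 2 by decide)) * e 2
      - (e_swap_sum (show (0:Fin 3) ≠ 2 by decide)) * (e 1 * e 2)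

lemma ι_eq (v : Fin 3 → ℝ) :
    CliffordAlgebra.ι Q3 v = v 0 • e 0 + v 1 • e 1 + v 2 • e 2 := by
  have hv : v = v 0 • (Pi.single 0 1 : Fin 3 → ℝ) + v 1 • (Pi.single 1 1 : Fin 3 → ℝ)
      + v 2 • (Pi.single 2 1 : Fin 3 → ℝ) := by
    funext j; fin_cases j <;> simp
  rw [hv]
  simp [e, map_add, map_smul]

lemma e123_sq : e123 * e123 = 1 := by
  show e 0 * e 1 * e 2 * (e 0 * e 1 * e 2) = 1
  linear_combination (norm := noncomm_ring)
    (e 0 * e 1) * e_swap_sum (show (2:Fin 3) ≠ 0 by decide) * (e 1 * e 2)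
    - e 0 * e_swap_sum (show (1:Fin 3) ≠ 0 by decide) * (e 2 * e 1 * e 2)
    + e_sq 0 * (e 1 * e 2 * e 1 * e 2)
    - e 1 * e_swap_sum (show (2:Fin 3) ≠ 1 by decide) * e 2
    + e_sq 1 * (e 2 * e 2)
    - e_sq 2

lemma e123_central (x : Cl3) : e123 * x = x * e123 := by
  induction x using CliffordAlgebra.induction with
  | algebraMap r => exact (Algebra.commutes r e123).symm
  | ι v => rw [ι_eq]
           simp only [mul_add, add_mul, mul_smul_comm, smul_mul_assoc, e123_comm_e]
  | mul a b ha hb => rw [← mul_assoc, ha, mul_assoc, hb, mul_assoc]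
  | add a b ha hb => rw [mul_add, add_mul, ha, hb]

lemma ωp_add_ωm : ωp + ωm = 1 := by
  rw [ωp, ωm, ← smul_add]
  have h : (1 + e123) + (1 - e123) = (2:ℝ) • 1 := by
    rw [two_smul]; abel
  rw [h, smul_smul]; norm_num

lemma ωp_mul_ωp : ωp * ωp = ωp := by
  rw [ωp, smul_mul_smul_comm]
  rw [show (1 + e123) * (1 + e123) = (2:ℝ) • (1 + e123) by
    have := e123_sq
    rw [two_smul]
    linear_combination (norm := noncomm_ring) e123_sq]
  rw [smul_smul]; norm_num

lemma ωm_mul_ωm : ωm * ωm = ωm := by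
  rw [ωm, smul_mul_smul_comm]
  rw [show (1 - e123) * (1 - e123) = (2:ℝ) • (1 - e123) by
    rw [two_smul]
    linear_combination (norm := noncomm_ring) e123_sq]
  rw [smul_smul]; norm_num

lemma ωp_mul_ωm : ωp * ωm = 0 := by
  rw [ωp, ωm, smul_mul_smul_comm]
  rw [show (1 + e123) * (1 - e123) = 0 by
    linear_combination (norm := noncomm_ring) -e123_sq]
  simp

lemma ωm_mul_ωp : ωm * ωp = 0 := by
  rw [ωp, ωm, smul_mul_smul_comm]
  rw [show (1 - e123) * (1 + e123) = 0 by
    linear_combination (norm := noncomm_ring) -e123_sq]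
  simp

lemma ωp_comm (x : Cl3) : ωp * x = x * ωp := by
  rw [ωp, smul_mul_assoc, mul_smul_comm, add_mul, mul_add, one_mul, mul_one, e123_central]

lemma ωm_comm (x : Cl3) : ωm * x = x * ωm := by
  rw [ωm, smul_mul_assoc, mul_smul_comm, sub_mul, mul_sub, one_mul, mul_one, e123_central]

lemma e123_e0_e1 : e123 * e 0 * e 1 = -(e 2) := by
  show e 0 * e 1 * e 2 * e 0 * e 1 = -(e 2)
  linear_combination (norm := noncomm_ring)
    (e 0 * e 1) * e_swap_sum (show (2:Fin 3) ≠ 0 by decide) * (e 1)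
    - e 0 * e_swap_sum (show (1:Fin 3) ≠ 0 by decide) * (e 2 * e 1)
    + e_sq 0 * (e 1 * e 2 * e 1)
    - e 1 * e_swap_sum (show (2:Fin 3) ≠ 1 by decide)
    + e_sq 1 * (e 2)

lemma ωp_sub_ωm : ωp - ωm = e123 := by
  rw [ωp, ωm, ← smul_sub]
  have h : (1 + e123) - (1 - e123) = (2:ℝ) • e123 := by rw [two_smul]; abel
  rw [h, smul_smul]; norm_num

/-- Quaternion basis mapping `i ↦ e₀`, `j ↦ e₁`. -/

noncomputable def B1 : QuaternionAlgebra.Basis Cl3 (-1 : ℝ) (0 : ℝ) (-1 : ℝ) where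
  i := e 0
  j := e 1
  k := e 0 * e 1
  i_mul_i := by rw [e_sq]; simp
  j_mul_j := by rw [e_sq]; simp
  i_mul_j := rfl
  j_mul_i := by rw [e_anti (show (1:Fin 3) ≠ 0 by decide)]; simp

/-- Quaternion basis mapping `i ↦ -e₀`, `j ↦ -e₁`. -/

noncomputable def B2 : QuaternionAlgebra.Basis Cl3 (-1 : ℝ) (0 : ℝ) (-1 : ℝ) where
  i := -(e 0)
  j := -(e 1)
  k := e 0 * e 1
  i_mul_i := by simp [e_sq]
  j_mul_j := by simp [e_sq]
  i_mul_j := by simp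
  j_mul_i := by simp [e_anti (show (1:Fin 3) ≠ 0 by decide)]

noncomputable def G1 : ℍ[ℝ] →ₐ[ℝ] Cl3 := B1.liftHom

noncomputable def G2 : ℍ[ℝ] →ₐ[ℝ] Cl3 := B2.liftHom

lemma g_key (A B C D : Cl3) :
    (ωp * A + ωm * B) * (ωp * C + ωm * D) = ωp * (A * C) + ωm * (B * D) := by
  have h1 : ωp * A * (ωp * C) = ωp * (A * C) := by
    rw [← mul_assoc, mul_assoc ωp A ωp, ← ωp_comm A, ← mul_assoc, ωp_mul_ωp, mul_assoc]
  have h2 : ωp * A * (ωm * D) = 0 := by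
    rw [← mul_assoc, mul_assoc ωp A ωm, ← ωm_comm A, ← mul_assoc, ωp_mul_ωm, zero_mul, zero_mul]
  have h3 : ωm * B * (ωp * C) = 0 := by
    rw [← mul_assoc, mul_assoc ωm B ωp, ← ωp_comm B, ← mul_assoc, ωm_mul_ωp, zero_mul, zero_mul]
  have h4 : ωm * B * (ωm * D) = ωm * (B * D) := by
    rw [← mul_assoc, mul_assoc ωm B ωm, ← ωm_comm B, ← mul_assoc, ωm_mul_ωm, mul_assoc]
  rw [add_mul, mul_add, mul_add, h1, h2, h3, h4, add_zero, zero_add]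

noncomputable def gfun (p : ℍ[ℝ] × ℍ[ℝ]) : Cl3 := ωp * G1 p.1 + ωm * G2 p.2

lemma gfun_one : gfun 1 = 1 := by
  rw [gfun]
  rw [show ((1 : ℍ[ℝ] × ℍ[ℝ]).1) = 1 from rfl, show ((1 : ℍ[ℝ] × ℍ[ℝ]).2) = 1 from rfl]
  rw [map_one, map_one, mul_one, mul_one, ωp_add_ωm]

lemma gfun_mul (x y : ℍ[ℝ] × ℍ[ℝ]) : gfun (x * y) = gfun x * gfun y := by
  rw [gfun, gfun, gfun]
  rw [show ((x * y).1) = x.1 * y.1 from rfl, show ((x * y).2) = x.2 * y.2 from rfl]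
  rw [map_mul, map_mul, g_key]

lemma gfun_add (x y : ℍ[ℝ] × ℍ[ℝ]) : gfun (x + y) = gfun x + gfun y := by
  rw [gfun, gfun, gfun]
  rw [show ((x + y).1) = x.1 + y.1 from rfl, show ((x + y).2) = x.2 + y.2 from rfl]
  rw [map_add, map_add, mul_add, mul_add]; abel

lemma gfun_smul (r : ℝ) (p : ℍ[ℝ] × ℍ[ℝ]) : gfun (r • p) = r • gfun p := by
  rw [gfun, gfun]
  rw [show ((r • p).1) = r • p.1 from rfl, show ((r • p).2) = r • p.2 from rfl]
  rw [map_smul, map_smul, mul_smul_comm, mul_smul_comm, ← smul_add]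

lemma gfun_zero : gfun 0 = 0 := by
  rw [gfun]
  rw [show ((0 : ℍ[ℝ] × ℍ[ℝ]).1) = 0 from rfl, show ((0 : ℍ[ℝ] × ℍ[ℝ]).2) = 0 from rfl]
  rw [map_zero, map_zero, mul_zero, mul_zero, add_zero]

/-- The inverse map `ℍ × ℍ → Cl3`. -/

noncomputable def g : (ℍ[ℝ] × ℍ[ℝ]) →ₐ[ℝ] Cl3 :=
  AlgHom.mk'
    { toFun := gfun
      map_one' := gfun_one
      map_mul' := gfun_mul
      map_zero' := gfun_zero
      map_add' := gfun_add }
    gfun_smul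

lemma g_apply (p : ℍ[ℝ] × ℍ[ℝ]) : g p = ωp * G1 p.1 + ωm * G2 p.2 := rfl

lemma Q3_apply (v : Fin 3 → ℝ) : Q3 v = -(v 0 * v 0 + v 1 * v 1 + v 2 * v 2) := by
  simp [Q3, QuadraticMap.weightedSumSquares_apply, Fin.sum_univ_three]

/-- The linear map underlying `f`. -/

noncomputable def φ : (Fin 3 → ℝ) →ₗ[ℝ] (ℍ[ℝ] × ℍ[ℝ]) where
  toFun v := (⟨0, v 0, v 1, -(v 2)⟩, ⟨0, -(v 0), -(v 1), v 2⟩)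
  map_add' v w := by
    refine Prod.ext ?_ ?_ <;> (ext <;> simp <;> erw [QuaternionAlgebra.mk_add_mk] <;> simp <;> ring)
  map_smul' r v := by
    refine Prod.ext ?_ ?_ <;> (ext <;> simp <;> erw [QuaternionAlgebra.smul_mk] <;> simp <;> ring)

lemma φ_sq (v : Fin 3 → ℝ) : φ v * φ v = algebraMap ℝ (ℍ[ℝ] × ℍ[ℝ]) (Q3 v) := by
  rw [Q3_apply]
  refine Prod.ext ?_ ?_ <;>
    (ext <;> simp [φ] <;> erw [QuaternionAlgebra.mk_mul_mk] <;> simp <;> ring)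

/-- The map `Cl3 → ℍ × ℍ`. -/

noncomputable def f : Cl3 →ₐ[ℝ] (ℍ[ℝ] × ℍ[ℝ]) :=
  CliffordAlgebra.lift Q3 ⟨φ, φ_sq⟩

lemma f_ι (v : Fin 3 → ℝ) : f (CliffordAlgebra.ι Q3 v) = φ v :=
  CliffordAlgebra.lift_ι_apply _ _ _

lemma G1_mk (a b c d : ℝ) :
    G1 ⟨a, b, c, d⟩ = algebraMap ℝ Cl3 a + b • e 0 + c • e 1 + d • (e 0 * e 1) := rfl

lemma G2_mk (a b c d : ℝ) :
    G2 ⟨a, b, c, d⟩ = algebraMap ℝ Cl3 a + b • (-(e 0)) + c • (-(e 1)) + d • (e 0 * e 1) := rfl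

lemma gf_e (i : Fin 3) : g (f (e i)) = e i := by
  fin_cases i
  · show g (f (CliffordAlgebra.ι Q3 (Pi.single 0 1))) = CliffordAlgebra.ι Q3 (Pi.single 0 1)
    rw [f_ι]
    have h1 : (φ (Pi.single (0:Fin 3) 1)).1 = ⟨0,1,0,0⟩ := by ext <;> simp [φ]
    have h2 : (φ (Pi.single (0:Fin 3) 1)).2 = ⟨0,-1,0,0⟩ := by ext <;> simp [φ]
    rw [g_apply, h1, h2, G1_mk, G2_mk]
    simp only [map_zero, zero_add, one_smul, zero_smul, add_zero, neg_smul, neg_neg, smul_neg,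
      one_smul, neg_zero]
    rw [← add_mul, ωp_add_ωm, one_mul]
    rfl
  · show g (f (CliffordAlgebra.ι Q3 (Pi.single 1 1))) = CliffordAlgebra.ι Q3 (Pi.single 1 1)
    rw [f_ι]
    have h1 : (φ (Pi.single (1:Fin 3) 1)).1 = ⟨0,0,1,0⟩ := by ext <;> simp [φ]
    have h2 : (φ (Pi.single (1:Fin 3) 1)).2 = ⟨0,0,-1,0⟩ := by ext <;> simp [φ]
    rw [g_apply, h1, h2, G1_mk, G2_mk]
    simp only [map_zero, zero_add, one_smul, zero_smul, add_zero, neg_smul, neg_neg, smul_neg,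
      one_smul, neg_zero]
    rw [← add_mul, ωp_add_ωm, one_mul]
    rfl
  · show g (f (CliffordAlgebra.ι Q3 (Pi.single 2 1))) = CliffordAlgebra.ι Q3 (Pi.single 2 1)
    rw [f_ι]
    have h1 : (φ (Pi.single (2:Fin 3) 1)).1 = ⟨0,0,0,-1⟩ := by ext <;> simp [φ]
    have h2 : (φ (Pi.single (2:Fin 3) 1)).2 = ⟨0,0,0,1⟩ := by ext <;> simp [φ]
    rw [g_apply, h1, h2, G1_mk, G2_mk]
    simp only [map_zero, zero_add, one_smul, zero_smul, add_zero, neg_smul, neg_neg, smul_neg,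
      one_smul, neg_zero]
    have step : ωp * -(e 0 * e 1) + ωm * (e 0 * e 1) = -((ωp - ωm) * (e 0 * e 1)) := by
      noncomm_ring
    rw [step, ωp_sub_ωm, ← mul_assoc, e123_e0_e1, neg_neg]
    rfl

lemma gf (x : Cl3) : g (f x) = x := by
  have h : g.comp f = AlgHom.id ℝ Cl3 := by
    apply CliffordAlgebra.hom_ext
    apply (Pi.basisFun ℝ (Fin 3)).ext
    intro i
    simp only [LinearMap.coe_comp, Function.comp_apply, AlgHom.toLinearMap_apply,
      AlgHom.comp_apply, AlgHom.coe_id, id_eq, Pi.basisFun_apply]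
    exact gf_e i
  calc g (f x) = (g.comp f) x := rfl
    _ = x := by rw [h]; rfl

lemma f_inj : Function.Injective f := by
  intro a b hab
  have := congrArg g hab
  rwa [gf, gf] at this

lemma f_star (x : Cl3) : f (star x) = star (f x) := by
  induction x using CliffordAlgebra.induction with
  | algebraMap r =>
    rw [CliffordAlgebra.star_algebraMap, f.commutes]
    refine Prod.ext ?_ ?_ <;> simp [Prod.fst_star, Prod.snd_star]
  | ι v =>
    rw [CliffordAlgebra.star_ι, map_neg, f_ι]
    refine Prod.ext ?_ ?_ <;> (ext <;> simp [φ, Prod.fst_star, Prod.snd_star] <;>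
      erw [QuaternionAlgebra.neg_mk, QuaternionAlgebra.star_mk] <;> simp)
  | mul a b ha hb => rw [star_mul, map_mul, map_mul, star_mul, ha, hb]
  | add a b ha hb => rw [star_add, map_add, map_add, star_add, ha, hb]

lemma quat_star_eq_neg (q : ℍ[ℝ]) (h : q * q = -1) : star q = -q := by
  obtain ⟨a, b, c, d⟩ := q
  erw [QuaternionAlgebra.ext_iff] at h
  obtain ⟨h1, h2, h3, h4⟩ := h
  erw [QuaternionAlgebra.mk_mul_mk] at h1 h2 h3 h4
  simp at h1 h2 h3 h4
  have ha : a = 0 := by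
    by_contra ha
    have hb : b = 0 := by
      rcases mul_eq_zero.1 (show a * b = 0 by linarith) with h | h
      exacts [absurd h ha, h]
    have hc : c = 0 := by
      rcases mul_eq_zero.1 (show a * c = 0 by linarith) with h | h
      exacts [absurd h ha, h]
    have hd : d = 0 := by
      rcases mul_eq_zero.1 (show a * d = 0 by linarith) with h | h
      exacts [absurd h ha, h]
    rw [hb, hc, hd] at h1
    nlinarith
  ext <;> simp [ha] <;> erw [QuaternionAlgebra.neg_mk, QuaternionAlgebra.star_mk] <;> simp

lemma star_eq_neg (x : Cl3) (hx : x ^ 2 = -1) : star x = -x := by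
  apply f_inj
  rw [f_star, map_neg]
  have hxx : f x * f x = -1 := by rw [← map_mul, ← sq, hx, map_neg, map_one]
  have h1 : (f x).1 * (f x).1 = -1 := congrArg Prod.fst hxx
  have h2 : (f x).2 * (f x).2 = -1 := congrArg Prod.snd hxx
  refine Prod.ext ?_ ?_
  · rw [Prod.fst_star, Prod.fst_neg, quat_star_eq_neg _ h1]
  · rw [Prod.snd_star, Prod.snd_neg, quat_star_eq_neg _ h2]

/-- A square root of `-1` in `ℝ₃` has norm `1` and trace `0`, hence lies in the
quadratic cone. -/
theorem sqrt_neg_one_mem_qcone (x : Cl3) (hx : x ^ 2 = -1) :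
    cnorm x = 1 ∧ ctrace x = 0 ∧ x ∈ QCone := by
  have hc : cconj x = -x := star_eq_neg x hx
  have hn : cnorm x = 1 := by
    rw [cnorm, hc, mul_neg, ← sq, hx, neg_neg]
  have ht : ctrace x = 0 := by rw [ctrace, hc, add_neg_cancel]
  refine ⟨hn, ht, ?_⟩
  by_cases hr : x ∈ realSet
  · exact Or.inl hr
  · refine Or.inr ⟨hr, ⟨0, by rw [ht, map_zero]⟩, ⟨1, by rw [hn, map_one]⟩⟩
end

section
/- Let $D\subset D_1$ be symmetric open subsets of $\mathbb{C}$ such that $H_1(D)\to H_1(D_1)$ (induced by inclusion) is injective. Then $H_1(D^+)\to H_1(D_1^+)$ is injective, where $D^+=\{z\in D: \mathrm{Im}(z)\geq 0\}$ and similarly for $D_1^+$. -/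
open CategoryTheory

noncomputable def singularHomologyFunctor (n : ℕ) : TopCat ⥤ ModuleCat ℤ :=
  TopCat.toSSet ⋙ ((SimplicialObject.whiskering _ _).obj (ModuleCat.free ℤ)) ⋙
    AlgebraicTopology.alternatingFaceMapComplex (ModuleCat ℤ) ⋙
    HomologicalComplex.homologyFunctor (ModuleCat ℤ) (ComplexShape.down ℕ) n

/-- Singular homology of a topological space with integer coefficients. -/
noncomputable def SH (n : ℕ) (X : Type) [TopologicalSpace X] : Type :=
  (singularHomologyFunctor n).obj (TopCat.of X)

noncomputable instance SH.instAddCommGroup (n : ℕ) (X : Type) [TopologicalSpace X] :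
    AddCommGroup (SH n X) :=
  ((singularHomologyFunctor n).obj (TopCat.of X)).isAddCommGroup

noncomputable instance SH.instModule (n : ℕ) (X : Type) [TopologicalSpace X] :
    Module ℤ (SH n X) :=
  ((singularHomologyFunctor n).obj (TopCat.of X)).isModule

/-- The map induced on singular homology by a continuous map. -/
noncomputable def SHlin (n : ℕ) {X Y : Type} [TopologicalSpace X] [TopologicalSpace Y]
    (f : C(X, Y)) : SH n X →ₗ[ℤ] SH n Y :=
  ((singularHomologyFunctor n).map (X := TopCat.of X) (Y := TopCat.of Y) (TopCat.ofHom f)).hom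

/-- The map induced on singular homology by an inclusion of subspaces. -/
noncomputable def SHincl (n : ℕ) {α : Type} [TopologicalSpace α] {S T : Set α} (h : S ⊆ T) :
    SH n S →ₗ[ℤ] SH n T :=
  SHlin n ⟨Set.inclusion h, continuous_inclusion h⟩

/-- The closed upper part of `D`. -/
def Dplus (D : Set ℂ) : Set ℂ := {z | z ∈ D ∧ 0 ≤ z.im}

/-! Folding `z ↦ re z + |im z| i` is a retraction of a conjugation-invariant `D` onto `D⁺`, so
`H₁(D⁺) → H₁(D)` is injective. Composed with the injective `H₁(D) → H₁(D₁)` it equals the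
composite `H₁(D⁺) → H₁(D₁⁺) → H₁(D₁)`, whose first factor is therefore injective. -/

lemma SHlin_comp (n : ℕ) {X Y Z : Type} [TopologicalSpace X] [TopologicalSpace Y]
    [TopologicalSpace Z] (f : C(X, Y)) (g : C(Y, Z)) :
    SHlin n (g.comp f) = (SHlin n g).comp (SHlin n f) := by
  unfold SHlin
  rw [show TopCat.ofHom (g.comp f) = TopCat.ofHom f ≫ TopCat.ofHom g from rfl, Functor.map_comp]
  rfl

lemma SHlin_id (n : ℕ) (X : Type) [TopologicalSpace X] :
    SHlin n (ContinuousMap.id X) = LinearMap.id :=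
  congrArg ModuleCat.Hom.hom ((singularHomologyFunctor n).map_id (TopCat.of X))

lemma SHincl_comp (n : ℕ) {α : Type} [TopologicalSpace α] {S T U : Set α} (hST : S ⊆ T)
    (hTU : T ⊆ U) : (SHincl n hTU).comp (SHincl n hST) = SHincl n (hST.trans hTU) :=
  (SHlin_comp n _ _).symm

lemma SHincl_injective_of_retraction (n : ℕ) {α : Type} [TopologicalSpace α] {S T : Set α}
    (h : S ⊆ T) (r : C(T, S)) (hr : ∀ x : S, r (Set.inclusion h x) = x) :
    Function.Injective (SHincl n h) := by
  have hcomp : r.comp ⟨Set.inclusion h, continuous_inclusion h⟩ = ContinuousMap.id S :=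
    ContinuousMap.ext hr
  have hleft : (SHlin n r).comp (SHincl n h) = LinearMap.id := by
    rw [SHincl, ← SHlin_comp, hcomp, SHlin_id]
  exact Function.LeftInverse.injective (g := SHlin n r) (LinearMap.congr_fun hleft)

def foldUpper (z : ℂ) : ℂ := ⟨z.re, |z.im|⟩

lemma continuous_foldUpper : Continuous foldUpper :=
  Complex.equivRealProdCLM.symm.continuous.comp
    (Complex.continuous_re.prodMk (continuous_abs.comp Complex.continuous_im))

lemma foldUpper_of_im_nonneg {z : ℂ} (hz : 0 ≤ z.im) : foldUpper z = z :=
  Complex.ext rfl (abs_of_nonneg hz)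

lemma foldUpper_mem_Dplus {D : Set ℂ} (hsymD : ∀ z ∈ D, (starRingEnd ℂ) z ∈ D) {z : ℂ}
    (hz : z ∈ D) : foldUpper z ∈ Dplus D := by
  refine ⟨?_, abs_nonneg z.im⟩
  rcases le_or_gt 0 z.im with him | him
  · rwa [foldUpper_of_im_nonneg him]
  · convert hsymD z hz using 1
    exact Complex.ext rfl (by simp [foldUpper, abs_of_neg him])

lemma SHincl_Dplus_injective (n : ℕ) {D : Set ℂ} (hsymD : ∀ z ∈ D, (starRingEnd ℂ) z ∈ D) :
    Function.Injective (SHincl n (fun _ hz => hz.1 : Dplus D ⊆ D)) :=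
  SHincl_injective_of_retraction n _
    ⟨fun z => ⟨foldUpper z, foldUpper_mem_Dplus hsymD z.2⟩,
      (continuous_foldUpper.comp continuous_subtype_val).subtype_mk _⟩
    fun z => Subtype.ext (foldUpper_of_im_nonneg z.2.2)

theorem h1_plus_injective_general (D D₁ : Set ℂ)
    (hsymD : ∀ z ∈ D, (starRingEnd ℂ) z ∈ D)
    (hsub : D ⊆ D₁)
    (hinj : Function.Injective (SHincl 1 hsub)) :
    Function.Injective
      (SHincl 1 (fun z hz => ⟨hsub hz.1, hz.2⟩ : Dplus D ⊆ Dplus D₁)) := by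
  have hsquare : (SHincl 1 (fun _ hz => hz.1 : Dplus D₁ ⊆ D₁)).comp
      (SHincl 1 (fun _ hz => ⟨hsub hz.1, hz.2⟩ : Dplus D ⊆ Dplus D₁))
      = (SHincl 1 hsub).comp (SHincl 1 (fun _ hz => hz.1 : Dplus D ⊆ D)) :=
    (SHincl_comp 1 _ _).trans (SHincl_comp 1 _ _).symm
  have hcomp := hinj.comp (SHincl_Dplus_injective 1 hsymD)
  rw [← LinearMap.coe_comp, ← hsquare, LinearMap.coe_comp] at hcomp
  exact hcomp.of_comp

/-- If `D ⊆ D₁` are symmetric open subsets of `ℂ` and `H₁(D) → H₁(D₁)` is injective,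
then `H₁(D⁺) → H₁(D₁⁺)` is injective. -/
theorem h1_plus_injective (D D₁ : Set ℂ) (hD : IsOpen D) (hD₁ : IsOpen D₁)
    (hsymD : ∀ z ∈ D, (starRingEnd ℂ) z ∈ D)
    (hsymD₁ : ∀ z ∈ D₁, (starRingEnd ℂ) z ∈ D₁)
    (hsub : D ⊆ D₁)
    (hinj : Function.Injective (SHincl 1 hsub)) :
    Function.Injective
      (SHincl 1 (fun z hz => ⟨hsub hz.1, hz.2⟩ : Dplus D ⊆ Dplus D₁)) :=
  h1_plus_injective_general D D₁ hsymD hsub hinj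
end
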